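/- For all λ > 0, γ ≥ 0 and β > 0, ∫₀^∞ e^{−γh²} · (1/(βh²))(1 − e^{−βh²}) · 4πλ^{3/2} h² e^{−λπh²} dh = (2λπ/β) [ (1 + γ/(λπ))^{−1/2} − (1 + (γ+β)/(λπ))^{−1/2} ]. Equivalently, if H has Nakagami(3/2, 3/(2λπ)) density 4πλ^{3/2}h²e^{−λπh²} and, conditionally on H = h, R² is uniformly distributed on [0, h²], then E[e^{−γH² − βR²}] equals the right-hand side. -/

import Mathlib

/-!
The factor `h²` of the density cancels the `1 / (β h²)` coming from averaging `e^{-β r²}` over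
`r² ∈ [0, h²]`, so the integrand is a constant times a difference of two Gaussians
`e^{-(λπ + γ) h²} - e^{-(λπ + γ + β) h²}`; each half-line Gaussian integral is
`√π / 2 · c^{-1/2}`.
-/

open MeasureTheory Set Real

theorem integral_Ioi_exp_neg_mul_sq {c : ℝ} (hc : 0 < c) :
    ∫ x in Ioi (0:ℝ), exp (-c * x ^ 2) = √π / 2 * c ^ (-(1:ℝ) / 2) := by
  rw [integral_gaussian_Ioi, sqrt_div' _ hc.le, sqrt_eq_rpow c, neg_div, rpow_neg hc.le]
  ring

theorem rpow_add_eq_mul_rpow_one_add_div {p x : ℝ} (hp : 0 < p) (hpx : 0 ≤ p + x) (r : ℝ) :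
    (p + x) ^ r = p ^ r * (1 + x / p) ^ r := by
  rw [← mul_rpow hp.le (by rw [one_add_div hp.ne']; positivity), mul_one_add,
    mul_div_cancel₀ _ hp.ne']

theorem nakagami_laplace_integrand_eq (lam γ β : ℝ) {h : ℝ} (hβ : β ≠ 0) (hh : h ≠ 0) :
    exp (-(γ * h ^ 2)) * (1 / (β * h ^ 2) * (1 - exp (-(β * h ^ 2)))) *
        (4 * π * lam ^ ((3:ℝ)/2) * h ^ 2 * exp (-(lam * π * h ^ 2))) =
      4 * π * lam ^ ((3:ℝ)/2) / β *
        (exp (-(lam * π + γ) * h ^ 2) - exp (-(lam * π + (γ + β)) * h ^ 2)) := by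
  have hadd : exp (-(lam * π + (γ + β)) * h ^ 2)
      = exp (-(lam * π + γ) * h ^ 2) * exp (-(β * h ^ 2)) := by
    rw [← exp_add]; ring_nf
  rw [hadd, show -(lam * π + γ) * h ^ 2 = -(γ * h ^ 2) + -(lam * π * h ^ 2) by ring, exp_add]
  field_simp

theorem rpow_three_halves_mul_rpow_neg_half_mul_sqrt_pi {lam : ℝ} (hlam : 0 < lam) :
    lam ^ ((3:ℝ)/2) * (lam * π) ^ (-(1:ℝ)/2) * √π = lam := by
  calc lam ^ ((3:ℝ)/2) * (lam * π) ^ (-(1:ℝ)/2) * √π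
      = lam ^ ((3:ℝ)/2 + -(1:ℝ)/2) * π ^ (-(1:ℝ)/2 + 1/2) := by
        rw [mul_rpow hlam.le pi_pos.le, sqrt_eq_rpow, rpow_add hlam, rpow_add pi_pos]; ring
    _ = lam := by norm_num

theorem stmt_10 (lam γ β : ℝ) (hlam : 0 < lam) (hγ : 0 ≤ γ) (hβ : 0 < β) :
    (∫ h in Ioi (0:ℝ),
        Real.exp (-(γ * h ^ 2)) * (1 / (β * h ^ 2) * (1 - Real.exp (-(β * h ^ 2)))) *
          (4 * Real.pi * lam ^ ((3:ℝ)/2) * h ^ 2 * Real.exp (-(lam * Real.pi * h ^ 2)))) =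
      2 * lam * Real.pi / β *
        ((1 + γ / (lam * Real.pi)) ^ (-(1:ℝ)/2) -
          (1 + (γ + β) / (lam * Real.pi)) ^ (-(1:ℝ)/2)) := by
  have hp : 0 < lam * π := mul_pos hlam pi_pos
  have ha : 0 < lam * π + γ := by positivity
  have hb : 0 < lam * π + (γ + β) := by positivity
  rw [setIntegral_congr_fun measurableSet_Ioi fun h hh =>
      nakagami_laplace_integrand_eq lam γ β hβ.ne' (ne_of_gt hh),
    integral_const_mul, integral_sub (integrable_exp_neg_mul_sq ha).integrableOn
      (integrable_exp_neg_mul_sq hb).integrableOn,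
    integral_Ioi_exp_neg_mul_sq ha, integral_Ioi_exp_neg_mul_sq hb,
    rpow_add_eq_mul_rpow_one_add_div hp ha.le, rpow_add_eq_mul_rpow_one_add_div hp hb.le]
  linear_combination (2 * π / β * ((1 + γ / (lam * π)) ^ (-(1:ℝ)/2) -
    (1 + (γ + β) / (lam * π)) ^ (-(1:ℝ)/2))) *
      rpow_three_halves_mul_rpow_neg_half_mul_sqrt_pi hlam
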